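/- arXiv:1801.01649 — 5 statements merged into one kernel-verified Lean document; each statement's English description precedes it below -/
import Mathlib

section
/- General gauge invariance of the partition function: consider a Forney-style graphical model with variables v ∈ X (each taking values in Fin d and adjacent to exactly two factors) and factors {f_α}. For gauges {G_{vα}} satisfying G_{vα}ᵀ G_{vβ} = I whenever N(v) = {α, β}, define f̂_α(x_α) = ∑_{x'_α} f_α(x'_α) ∏_{v∈N(α)} G_{vα}(x_v, x'_v). Then ∑_x ∏_α f̂_α(x_α) = ∑_x ∏_α f_α(x_α). -/
open Finset Matrix

/-! Expanding the product of the gauged factors turns the gauged partition function into a sum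
over one configuration `p α` per factor; summing out the original variables then leaves, for
each variable `v`, the factor
`∑ t, G_{v,a v}(t, ·) G_{v,b v}(t, ·) = (G_{v,a v}ᵀ G_{v,b v})(p (a v) v, p (b v) v)`.
For this to factor over the variables, the identity gauges that `gaugedFactor` places on
non-adjacent variables are first traded, using the locality of the factors, for gauges pinning
those variables to `0`. The result depends on `G` only through the products
`G_{v,a v}ᵀ G_{v,b v}`, so it equals the value for the identity gauge, which leaves every factor
unchanged. -/

/-- The "full" gauge associated to variable `v` and factor `α` in a Forney-style
GM where every variable `v` is adjacent to exactly the two factors `a v` and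
`b v`: it is the given gauge on adjacent factors and the identity otherwise. -/
noncomputable def fullGauge {V F : Type*} [DecidableEq F] (d : ℕ)
    (a b : V → F) (G : V → F → Matrix (Fin d) (Fin d) ℝ) (v : V) (α : F) :
    Matrix (Fin d) (Fin d) ℝ :=
  if a v = α ∨ b v = α then G v α else 1

/-- The gauge-transformed factor
`f̂_α(x) = ∑ x', f_α(x') ∏_v G_{vα}(x_v, x'_v)`, where non-adjacent variables
carry the identity gauge. -/
noncomputable def gaugedFactor {V F : Type*} [DecidableEq F] [Fintype V] [DecidableEq V] (d : ℕ)
    (a b : V → F) (G : V → F → Matrix (Fin d) (Fin d) ℝ)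
    (f : F → (V → Fin d) → ℝ) (α : F) (x : V → Fin d) : ℝ :=
  ∑ x' : V → Fin d, f α x' * ∏ v : V, fullGauge d a b G v α (x v) (x' v)

section

variable {V F ι : Type*}

noncomputable def partitionFunction [Fintype V] [DecidableEq V] [Fintype F] [Fintype ι]
    (f : F → (V → ι) → ℝ) : ℝ :=
  ∑ x, ∏ α, f α x

noncomputable def gaugeTransform [Fintype V] [DecidableEq V] [Fintype ι]
    (K : V → F → Matrix ι ι ℝ) (f : F → (V → ι) → ℝ) (α : F) (x : V → ι) : ℝ :=
  ∑ y, f α y * ∏ v, K v α (x v) (y v)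

theorem gaugeTransform_one [Fintype V] [DecidableEq V] [Fintype ι] [DecidableEq ι]
    (f : F → (V → ι) → ℝ) : gaugeTransform (fun _ _ => 1) f = f := by
  ext α x
  rw [gaugeTransform, Fintype.sum_eq_single x fun y hy => ?_]
  · simp
  · obtain ⟨v, hv⟩ := Function.ne_iff.mp hy
    rw [prod_eq_zero (mem_univ v) (by rw [one_apply_ne' hv]), mul_zero]

theorem partitionFunction_gaugeTransform [Fintype V] [DecidableEq V] [Fintype F] [DecidableEq F]
    [Fintype ι] (K : V → F → Matrix ι ι ℝ) (f : F → (V → ι) → ℝ) :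
    partitionFunction (gaugeTransform K f) =
      ∑ p : F → V → ι, (∏ α, f α (p α)) * ∏ v, ∑ t, ∏ α, K v α t (p α v) := by
  calc partitionFunction (gaugeTransform K f)
      = ∑ x : V → ι, ∑ p : F → V → ι, (∏ α, f α (p α)) * ∏ v, ∏ α, K v α (x v) (p α v) := by
        refine sum_congr rfl fun x _ => ?_
        simp only [gaugeTransform, Fintype.prod_sum, prod_mul_distrib]
        exact sum_congr rfl fun p _ => by rw [prod_comm]
    _ = _ := by
        rw [sum_comm]
        refine sum_congr rfl fun p _ => ?_
        rw [← mul_sum, ← Fintype.prod_sum fun v t => ∏ α, K v α t (p α v)]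

noncomputable def pinMatrix [DecidableEq ι] (c : ι) : Matrix ι ι ℝ :=
  of fun _ s => if s = c then 1 else 0

/-- Summing against the identity over a coordinate that `f` ignores is the same as pinning that
coordinate to a constant: the swap of `x v` and `c` in that coordinate transports one sum to the
other. -/
theorem sum_mul_prod_ite_one_eq_pinMatrix [Fintype V] [DecidableEq V] [Fintype ι] [DecidableEq ι]
    (P : V → Prop) [DecidablePred P] (f : (V → ι) → ℝ)
    (hf : ∀ y y', (∀ v, P v → y v = y' v) → f y = f y') (M : V → Matrix ι ι ℝ) (c : ι)
    (x : V → ι) :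
    ∑ y, f y * ∏ v, (if P v then M v else 1) (x v) (y v) =
      ∑ y, f y * ∏ v, (if P v then M v else pinMatrix c) (x v) (y v) := by
  let σ : (V → ι) → V → ι := fun y v => if P v then y v else Equiv.swap (x v) c (y v)
  have hσ : Function.Involutive σ := fun y => funext fun v => by by_cases h : P v <;> simp [σ, h]
  refine Fintype.sum_bijective σ hσ.bijective _ _ fun y => ?_
  congr 1
  · exact hf _ _ fun v hv => by simp [σ, hv]
  · refine prod_congr rfl fun v _ => ?_
    by_cases h : P v
    · simp [σ, h]
    · simp only [σ, h, if_false, one_apply, pinMatrix, of_apply, eq_comm (a := x v),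
        Equiv.swap_apply_eq_iff, Equiv.swap_apply_right]

variable [DecidableEq F] {d : ℕ} (a b : V → F)

noncomputable def pinnedGauge [NeZero d] (G : V → F → Matrix (Fin d) (Fin d) ℝ) (v : V) (α : F) :
    Matrix (Fin d) (Fin d) ℝ :=
  if a v = α ∨ b v = α then G v α else pinMatrix 0

theorem sum_prod_pinnedGauge [NeZero d] [Fintype F] (hab : ∀ v, a v ≠ b v)
    (G : V → F → Matrix (Fin d) (Fin d) ℝ) (v : V) (q : F → Fin d) :
    ∑ t, ∏ α, pinnedGauge a b G v α t (q α) =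
      ((G v (a v))ᵀ * G v (b v)) (q (a v)) (q (b v)) *
        ∏ α, if a v = α ∨ b v = α then 1 else if q α = 0 then 1 else 0 := by
  have hsplit : ∀ t, ∏ α, pinnedGauge a b G v α t (q α) =
      G v (a v) t (q (a v)) * G v (b v) t (q (b v)) *
        ∏ α, if a v = α ∨ b v = α then 1 else if q α = 0 then 1 else 0 := fun t =>
    calc ∏ α, pinnedGauge a b G v α t (q α)
        = ∏ α, (if a v = α ∨ b v = α then G v α t (q α) else 1) *
            (if a v = α ∨ b v = α then 1 else if q α = 0 then 1 else 0) := by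
          refine prod_congr rfl fun α _ => ?_
          unfold pinnedGauge
          split_ifs <;> simp [pinMatrix, *]
      _ = _ := by
          have hadj : ({α | a v = α ∨ b v = α} : Finset F) = {a v, b v} := by ext; simp [eq_comm]
          rw [prod_mul_distrib, ← prod_filter, hadj, prod_pair (hab v)]
  simp only [hsplit, ← sum_mul, mul_apply, transpose_apply]

variable [Fintype V] [DecidableEq V]

theorem gaugedFactor_eq_gaugeTransform (G : V → F → Matrix (Fin d) (Fin d) ℝ)
    (f : F → (V → Fin d) → ℝ) : gaugedFactor d a b G f = gaugeTransform (fullGauge d a b G) f :=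
  rfl

theorem gaugedFactor_one (f : F → (V → Fin d) → ℝ) : gaugedFactor d a b (fun _ _ => 1) f = f := by
  have : fullGauge d a b (fun _ _ => 1) = fun _ _ => 1 := by ext; simp [fullGauge]
  rw [gaugedFactor_eq_gaugeTransform, this, gaugeTransform_one]

theorem gaugedFactor_eq_gaugeTransform_pinnedGauge [NeZero d] {f : F → (V → Fin d) → ℝ}
    (hlocal : ∀ α x x', (∀ v : V, (a v = α ∨ b v = α) → x v = x' v) → f α x = f α x')
    (G : V → F → Matrix (Fin d) (Fin d) ℝ) :
    gaugedFactor d a b G f = gaugeTransform (pinnedGauge a b G) f := by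
  ext α x
  exact sum_mul_prod_ite_one_eq_pinMatrix _ (f α) (hlocal α) (fun v => G v α) 0 x

theorem partitionFunction_gaugedFactor [NeZero d] [Fintype F] (hab : ∀ v, a v ≠ b v)
    {f : F → (V → Fin d) → ℝ}
    (hlocal : ∀ α x x', (∀ v : V, (a v = α ∨ b v = α) → x v = x' v) → f α x = f α x')
    (G : V → F → Matrix (Fin d) (Fin d) ℝ) :
    partitionFunction (gaugedFactor d a b G f) =
      ∑ p : F → V → Fin d, (∏ α, f α (p α)) *
        ∏ v, (((G v (a v))ᵀ * G v (b v)) (p (a v) v) (p (b v) v) *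
          ∏ α, if a v = α ∨ b v = α then 1 else if p α v = 0 then 1 else 0) := by
  rw [gaugedFactor_eq_gaugeTransform_pinnedGauge a b hlocal, partitionFunction_gaugeTransform]
  simp only [sum_prod_pinnedGauge a b hab]

end

/-- General gauge invariance of the partition function for Forney-style GMs:
each variable `v` is adjacent to exactly the two distinct factors `a v ≠ b v`,
each factor `f_α` depends only on its adjacent variables, and the gauges
satisfy `G_{v,a v}ᵀ * G_{v,b v} = 1`.  Then the partition function of the
gauge-transformed GM equals that of the original GM. -/
theorem gauge_invariance (V F : Type*) [Fintype V] [DecidableEq V] [Fintype F] [DecidableEq F]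
    (d : ℕ) [NeZero d]
    (a b : V → F) (hab : ∀ v, a v ≠ b v)
    (f : F → (V → Fin d) → ℝ)
    (hlocal : ∀ α x x', (∀ v : V, (a v = α ∨ b v = α) → x v = x' v) →
      f α x = f α x')
    (G : V → F → Matrix (Fin d) (Fin d) ℝ)
    (hG : ∀ v, (G v (a v))ᵀ * G v (b v) = 1) :
    ∑ x : V → Fin d, ∏ α : F, gaugedFactor d a b G f α x =
      ∑ x : V → Fin d, ∏ α : F, f α x := by
  change partitionFunction (gaugedFactor d a b G f) = partitionFunction f
  calc partitionFunction (gaugedFactor d a b G f)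
      = partitionFunction (gaugedFactor d a b (fun _ _ => 1) f) := by
        simp only [partitionFunction_gaugedFactor a b hab hlocal, hG, transpose_one, mul_one]
    _ = partitionFunction f := by rw [gaugedFactor_one]
end

section
/- Theorem 1 (optimality of trivial reparameterization for symmetric binary GMs), two-factor instance: let f, g : {1,2} × {1,2} → ℝ>0 be symmetric (f(2,2)=f(1,1), f(2,1)=f(1,2), and same for g), let w₁, w₂ > 0 with w₁ + w₂ = 1, and define for θ : {1,2} → ℝ with θ(1) + θ(2) unconstrained but reparameterization constraint e^{θ(x)} · e^{-θ(x)} = 1 (i.e., factor f gets multiplied by e^{θ(x₁)} and g by e^{-θ(x₁)}): F(θ) = ∑_y (∑_x (e^{θ(x)} f(x,y))^{1/w₁})^{w₁} (∑_x (e^{-θ(x)} g(x,y))^{1/w₂})^{w₂}. Then θ ≡ 0 is a global minimizer of F. -/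
/-!
By the symmetry of `f` and `g`, the two `y`-terms of `F(θ)` arise from each other by swapping
the two values of `x`, so at `θ = 0` they share a value `K` and `F(0) = 2K`. Their product is
at least `K²`: by `(u a + v b)(u b + v a) = u v (a + b)² + a b (u - v)²`, the `w₁`-factors
multiply to at least `e^{θ(1) + θ(2)}` times their value at `θ = 0`, and the `w₂`-factors to at
least `e^{-θ(1) - θ(2)}` times theirs. AM-GM then gives `F(θ) ≥ 2K`.
-/

open Finset Real

/-- The reparameterized WMBE bound for the two-factor GM sharing the split
binary variable `x` (weights `w₁, w₂`), the second variable `y` being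
eliminated exactly. -/
noncomputable def reparamWMBE (f g : Bool × Bool → ℝ) (w₁ w₂ : ℝ)
    (θ : Bool → ℝ) : ℝ :=
  ∑ y : Bool,
    (∑ x : Bool, (Real.exp (θ x) * f (x, y)) ^ (1 / w₁)) ^ w₁ *
      (∑ x : Bool, (Real.exp (-θ x) * g (x, y)) ^ (1 / w₂)) ^ w₂

/-- The weighted power sum by which WMBE eliminates a variable with weight `w`. -/
noncomputable def powerSum {ι : Type*} [Fintype ι] (w : ℝ) (h : ι → ℝ) : ℝ :=
  (∑ x, h x ^ (1 / w)) ^ w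

lemma powerSum_nonneg {ι : Type*} [Fintype ι] (w : ℝ) {h : ι → ℝ} (hh : ∀ x, 0 ≤ h x) :
    0 ≤ powerSum w h :=
  rpow_nonneg (sum_nonneg fun x _ => rpow_nonneg (hh x) _) _

lemma mul_mul_add_sq_le_mul_swap (u v a b : ℝ) (hab : 0 ≤ a * b) :
    u * v * (a + b) ^ 2 ≤ (u * a + v * b) * (u * b + v * a) := by
  linear_combination mul_nonneg hab (sq_nonneg (u - v))

lemma mul_mul_sq_powerSum_le_mul {w : ℝ} (hw : 0 < w) {u h : Bool → ℝ}
    (hu : ∀ x, 0 ≤ u x) (hh : ∀ x, 0 ≤ h x) :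
    u true * u false * powerSum w h ^ 2 ≤
      powerSum w (fun x => u x * h x) * powerSum w (fun x => u x * h (!x)) := by
  simp only [powerSum, Fintype.sum_bool, Bool.not_true, Bool.not_false, mul_rpow (hu _) (hh _)]
  have := hu true
  have := hu false
  have := hh true
  have := hh false
  have hpw {x : ℝ} (hx : 0 ≤ x) : (x ^ (1 / w)) ^ w = x := by
    rw [← rpow_mul hx, one_div_mul_cancel hw.ne', rpow_one]
  calc u true * u false * ((h true ^ (1 / w) + h false ^ (1 / w)) ^ w) ^ 2
      = (u true ^ (1 / w) * u false ^ (1 / w) *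
          (h true ^ (1 / w) + h false ^ (1 / w)) ^ 2) ^ w := by
        rw [mul_rpow (by positivity) (by positivity), mul_rpow (by positivity) (by positivity),
          hpw (hu _), hpw (hu _), rpow_pow_comm (by positivity)]
    _ ≤ _ :=
        (rpow_le_rpow (by positivity) (mul_mul_add_sq_le_mul_swap _ _ _ _ (by positivity))
          hw.le).trans_eq (mul_rpow (by positivity) (by positivity))

lemma sq_powerSum_mul_le_mul {w₁ w₂ : ℝ} (hw₁ : 0 < w₁) (hw₂ : 0 < w₂) {a b : Bool → ℝ}
    (ha : ∀ x, 0 ≤ a x) (hb : ∀ x, 0 ≤ b x) (θ : Bool → ℝ) :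
    (powerSum w₁ a * powerSum w₂ b) ^ 2 ≤
      (powerSum w₁ (fun x => exp (θ x) * a x) * powerSum w₂ (fun x => exp (-θ x) * b x)) *
        (powerSum w₁ (fun x => exp (θ x) * a (!x)) *
          powerSum w₂ (fun x => exp (-θ x) * b (!x))) := by
  have ha' := mul_mul_sq_powerSum_le_mul hw₁ (u := fun x => exp (θ x))
    (fun _ => (exp_pos _).le) ha
  have hb' := mul_mul_sq_powerSum_le_mul hw₂ (u := fun x => exp (-θ x))
    (fun _ => (exp_pos _).le) hb
  have hexp : exp (θ true) * exp (θ false) * (exp (-θ true) * exp (-θ false)) = 1 := by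
    rw [← exp_add, ← exp_add, ← exp_add, ← exp_zero]
    ring_nf
  calc (powerSum w₁ a * powerSum w₂ b) ^ 2
      = (exp (θ true) * exp (θ false) * powerSum w₁ a ^ 2) *
          (exp (-θ true) * exp (-θ false) * powerSum w₂ b ^ 2) := by
        linear_combination (-(powerSum w₁ a * powerSum w₂ b) ^ 2) * hexp
    _ ≤ _ := mul_le_mul ha' hb' (by positivity) <| mul_nonneg
        (powerSum_nonneg _ fun _ => mul_nonneg (exp_pos _).le (ha _))
        (powerSum_nonneg _ fun _ => mul_nonneg (exp_pos _).le (ha _))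
    _ = _ := by ring

lemma reparamWMBE_eq_of_symm {f g : Bool × Bool → ℝ} (hfsym : ∀ a b, f (!a, !b) = f (a, b))
    (hgsym : ∀ a b, g (!a, !b) = g (a, b)) (w₁ w₂ : ℝ) (θ : Bool → ℝ) :
    reparamWMBE f g w₁ w₂ θ =
      powerSum w₁ (fun x => exp (θ x) * f (x, false)) *
          powerSum w₂ (fun x => exp (-θ x) * g (x, false)) +
        powerSum w₁ (fun x => exp (θ x) * f (!x, false)) *
          powerSum w₂ (fun x => exp (-θ x) * g (!x, false)) := by
  have hf_true (x : Bool) : f (x, true) = f (!x, false) := by simpa using hfsym (!x) false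
  have hg_true (x : Bool) : g (x, true) = g (!x, false) := by simpa using hgsym (!x) false
  rw [reparamWMBE, Fintype.sum_bool, add_comm]
  simp only [powerSum, hf_true, hg_true]

lemma reparamWMBE_zero_of_symm {f g : Bool × Bool → ℝ} (hfsym : ∀ a b, f (!a, !b) = f (a, b))
    (hgsym : ∀ a b, g (!a, !b) = g (a, b)) (w₁ w₂ : ℝ) :
    reparamWMBE f g w₁ w₂ 0 =
      2 * (powerSum w₁ (fun x => f (x, false)) * powerSum w₂ (fun x => g (x, false))) := by
  rw [reparamWMBE_eq_of_symm hfsym hgsym]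
  simp only [powerSum, Pi.zero_apply, neg_zero, exp_zero, one_mul, Fintype.sum_bool,
    Bool.not_true, Bool.not_false, add_comm (f (false, false) ^ (1 / w₁)),
    add_comm (g (false, false) ^ (1 / w₂))]
  ring

theorem trivial_reparam_optimal_general (f g : Bool × Bool → ℝ)
    (hf : ∀ p, 0 < f p) (hg : ∀ p, 0 < g p)
    (hfsym : ∀ a b, f (!a, !b) = f (a, b))
    (hgsym : ∀ a b, g (!a, !b) = g (a, b))
    (w₁ w₂ : ℝ) (hw₁ : 0 < w₁) (hw₂ : 0 < w₂) :
    ∀ θ : Bool → ℝ, reparamWMBE f g w₁ w₂ 0 ≤ reparamWMBE f g w₁ w₂ θ := by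
  intro θ
  have hf' (r : ℝ) (p) : 0 ≤ exp r * f p := (mul_pos (exp_pos r) (hf p)).le
  have hg' (r : ℝ) (p) : 0 ≤ exp r * g p := (mul_pos (exp_pos r) (hg p)).le
  rw [reparamWMBE_zero_of_symm hfsym hgsym, reparamWMBE_eq_of_symm hfsym hgsym]
  exact two_mul_le_add_of_sq_le_mul
    (mul_nonneg (powerSum_nonneg _ fun _ => hf' _ _) (powerSum_nonneg _ fun _ => hg' _ _))
    (mul_nonneg (powerSum_nonneg _ fun _ => hf' _ _) (powerSum_nonneg _ fun _ => hg' _ _))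
    (sq_powerSum_mul_le_mul hw₁ hw₂ (fun _ => (hf _).le) (fun _ => (hg _).le) θ)

/-- Theorem 1 (two-factor instance): for strictly positive symmetric factors
`f, g` and Hölder weights `w₁, w₂ > 0` with `w₁ + w₂ = 1`, the trivial
reparameterization `θ ≡ 0` globally minimizes the reparameterized WMBE bound. -/
theorem trivial_reparam_optimal (f g : Bool × Bool → ℝ)
    (hf : ∀ p, 0 < f p) (hg : ∀ p, 0 < g p)
    (hfsym : ∀ a b, f (!a, !b) = f (a, b))
    (hgsym : ∀ a b, g (!a, !b) = g (a, b))
    (w₁ w₂ : ℝ) (hw₁ : 0 < w₁) (hw₂ : 0 < w₂) (hw : w₁ + w₂ = 1) :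
    ∀ θ : Bool → ℝ, reparamWMBE f g w₁ w₂ 0 ≤ reparamWMBE f g w₁ w₂ θ :=
  trivial_reparam_optimal_general f g hf hg hfsym hgsym w₁ w₂ hw₁ hw₂
end

section
/- With f, g, w₁, w₂ and F(θ) as in the symmetric two-factor WMBE setup, the derivative of log F at θ = 0 in direction δ equals ∑_x δ(x)(q_f(x) − q_g(x)), where q_f(x) ∝ ∑_y (marginal of the auxiliary distribution), and q_g is defined analogously; in particular, when f and g are symmetric, q_f(1) = q_f(2) = q_g(1) = q_g(2) = 1/2, so the gradient vanishes and θ = 0 is a stationary point of the reparameterization. -/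
open Finset Real

/-- The auxiliary marginal of the split variable `x` induced by the weighted
summation of the first mini-bucket (factor `f` with weight `w₁`), at `θ = 0`. -/
noncomputable def auxMarginal (f g : Bool × Bool → ℝ) (w₁ w₂ : ℝ)
    (x : Bool) : ℝ :=
  (∑ y : Bool,
      (∑ x' : Bool, f (x', y) ^ (1 / w₁)) ^ w₁ *
        (∑ x' : Bool, g (x', y) ^ (1 / w₂)) ^ w₂ *
          (f (x, y) ^ (1 / w₁) / ∑ x' : Bool, f (x', y) ^ (1 / w₁))) /
    reparamWMBE f g w₁ w₂ 0

lemma factor_rpow (r A B w : ℝ) (hr : 0 < r) (hA : 0 ≤ A) (hB : 0 ≤ B) (hw : 0 < w) :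
    ((r*A)^(1/w) + (r*B)^(1/w))^w = r * ((A^(1/w) + B^(1/w))^w) := by
  rw [Real.mul_rpow hr.le hA, Real.mul_rpow hr.le hB, ← mul_add,
    Real.mul_rpow (by positivity) (by positivity),
    ← Real.rpow_mul hr.le, one_div_mul_cancel hw.ne', Real.rpow_one]

lemma pair_eq (r s A B C D w₁ w₂ : ℝ) (hr : 0 < r) (hs : 0 < s) (hrs : r * s = 1)
    (hA : 0 ≤ A) (hB : 0 ≤ B) (hC : 0 ≤ C) (hD : 0 ≤ D)
    (hw₁ : 0 < w₁) (hw₂ : 0 < w₂) :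
    ((r*A)^(1/w₁) + (r*B)^(1/w₁))^w₁ * ((s*C)^(1/w₂) + (s*D)^(1/w₂))^w₂
      = (A^(1/w₁) + B^(1/w₁))^w₁ * (C^(1/w₂) + D^(1/w₂))^w₂ := by
  rw [factor_rpow r A B w₁ hr hA hB hw₁, factor_rpow s C D w₂ hs hC hD hw₂]
  calc r * (A^(1/w₁)+B^(1/w₁))^w₁ * (s * (C^(1/w₂)+D^(1/w₂))^w₂)
      = (r*s) * ((A^(1/w₁)+B^(1/w₁))^w₁ * (C^(1/w₂)+D^(1/w₂))^w₂) := by ring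
    _ = (A^(1/w₁)+B^(1/w₁))^w₁ * (C^(1/w₂)+D^(1/w₂))^w₂ := by rw [hrs, one_mul]

lemma aux_half (f g : Bool × Bool → ℝ)
    (hf : ∀ p, 0 < f p) (hg : ∀ p, 0 < g p)
    (hfsym : ∀ a b, f (!a, !b) = f (a, b))
    (hgsym : ∀ a b, g (!a, !b) = g (a, b))
    (w₁ w₂ : ℝ) (x : Bool) :
    auxMarginal f g w₁ w₂ x = 1 / 2 := by
  have hf1 : f (true, true) = f (false, false) := hfsym false false
  have hf2 : f (false, true) = f (true, false) := hfsym true false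
  have hg1 : g (true, true) = g (false, false) := hgsym false false
  have hg2 : g (false, true) = g (true, false) := hgsym true false
  set a := f (false, false) with ha
  set b := f (true, false) with hb
  set c := g (false, false) with hc
  set d := g (true, false) with hd
  have hP : (0:ℝ) < a ^ (1/w₁) + b ^ (1/w₁) := by
    have := hf (false, false); have := hf (true, false); positivity
  have hQ : (0:ℝ) < c ^ (1/w₂) + d ^ (1/w₂) := by
    have := hg (false, false); have := hg (true, false); positivity
  simp only [auxMarginal, reparamWMBE, Fintype.sum_bool, Pi.zero_apply,
    Real.exp_zero, one_mul, neg_zero, hf1, hf2, hg1, hg2]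
  cases x <;>
  · rw [show b ^ (1/w₁) + a ^ (1/w₁) = a ^ (1/w₁) + b ^ (1/w₁) from add_comm _ _,
      show d ^ (1/w₂) + c ^ (1/w₂) = c ^ (1/w₂) + d ^ (1/w₂) from add_comm _ _]
    rw [div_eq_iff (by positivity)]
    field_simp
    simp only [hf1, hf2]
    ring

theorem F_even (f g : Bool × Bool → ℝ)
    (hf : ∀ p, 0 < f p) (hg : ∀ p, 0 < g p)
    (hfsym : ∀ a b, f (!a, !b) = f (a, b))
    (hgsym : ∀ a b, g (!a, !b) = g (a, b))
    (w₁ w₂ : ℝ) (hw₁ : 0 < w₁) (hw₂ : 0 < w₂) (δ : Bool → ℝ) (t : ℝ) :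
    reparamWMBE f g w₁ w₂ (fun x => (-t) * δ x)
      = reparamWMBE f g w₁ w₂ (fun x => t * δ x) := by
  have hf1 : f (true, true) = f (false, false) := hfsym false false
  have hf2 : f (false, true) = f (true, false) := hfsym true false
  have hg1 : g (true, true) = g (false, false) := hgsym false false
  have hg2 : g (false, true) = g (true, false) := hgsym true false
  have h0a : 0 < f (false, false) := hf _
  have h0b : 0 < f (true, false) := hf _
  have h0c : 0 < g (false, false) := hg _
  have h0d : 0 < g (true, false) := hg _
  have hrs : Real.exp (t * (δ false + δ true)) * Real.exp (-(t * (δ false + δ true))) = 1 := by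
    rw [← Real.exp_add]; simp
  simp only [reparamWMBE, Fintype.sum_bool, hf1, hf2, hg1, hg2]
  have e1 : Real.exp (t * δ true) * f (false, false)
      = Real.exp (t * (δ false + δ true)) * (Real.exp (-t * δ false) * f (false, false)) := by
    rw [← mul_assoc, ← Real.exp_add]; ring_nf
  have e2 : Real.exp (t * δ false) * f (true, false)
      = Real.exp (t * (δ false + δ true)) * (Real.exp (-t * δ true) * f (true, false)) := by
    rw [← mul_assoc, ← Real.exp_add]; ring_nf
  have e3 : Real.exp (-(t * δ true)) * g (false, false)
      = Real.exp (-(t * (δ false + δ true))) * (Real.exp (-(-t * δ false)) * g (false, false)) := by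
    rw [← mul_assoc, ← Real.exp_add]; ring_nf
  have e4 : Real.exp (-(t * δ false)) * g (true, false)
      = Real.exp (-(t * (δ false + δ true))) * (Real.exp (-(-t * δ true)) * g (true, false)) := by
    rw [← mul_assoc, ← Real.exp_add]; ring_nf
  have e5 : Real.exp (t * δ true) * f (true, false)
      = Real.exp (t * (δ false + δ true)) * (Real.exp (-t * δ false) * f (true, false)) := by
    rw [← mul_assoc, ← Real.exp_add]; ring_nf
  have e6 : Real.exp (t * δ false) * f (false, false)
      = Real.exp (t * (δ false + δ true)) * (Real.exp (-t * δ true) * f (false, false)) := by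
    rw [← mul_assoc, ← Real.exp_add]; ring_nf
  have e7 : Real.exp (-(t * δ true)) * g (true, false)
      = Real.exp (-(t * (δ false + δ true))) * (Real.exp (-(-t * δ false)) * g (true, false)) := by
    rw [← mul_assoc, ← Real.exp_add]; ring_nf
  have e8 : Real.exp (-(t * δ false)) * g (false, false)
      = Real.exp (-(t * (δ false + δ true))) * (Real.exp (-(-t * δ true)) * g (false, false)) := by
    rw [← mul_assoc, ← Real.exp_add]; ring_nf
  rw [e1, e2, e3, e4, e5, e6, e7, e8,
    pair_eq (Real.exp (t * (δ false + δ true))) (Real.exp (-(t * (δ false + δ true))))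
      (Real.exp (-t * δ false) * f (false, false)) (Real.exp (-t * δ true) * f (true, false))
      (Real.exp (-(-t * δ false)) * g (false, false)) (Real.exp (-(-t * δ true)) * g (true, false)) w₁ w₂
      (Real.exp_pos _) (Real.exp_pos _) hrs
      (mul_pos (Real.exp_pos _) h0a).le (mul_pos (Real.exp_pos _) h0b).le
      (mul_pos (Real.exp_pos _) h0c).le (mul_pos (Real.exp_pos _) h0d).le hw₁ hw₂,
    pair_eq (Real.exp (t * (δ false + δ true))) (Real.exp (-(t * (δ false + δ true))))
      (Real.exp (-t * δ false) * f (true, false)) (Real.exp (-t * δ true) * f (false, false))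
      (Real.exp (-(-t * δ false)) * g (true, false)) (Real.exp (-(-t * δ true)) * g (false, false)) w₁ w₂
      (Real.exp_pos _) (Real.exp_pos _) hrs
      (mul_pos (Real.exp_pos _) h0b).le (mul_pos (Real.exp_pos _) h0a).le
      (mul_pos (Real.exp_pos _) h0d).le (mul_pos (Real.exp_pos _) h0c).le hw₁ hw₂]
  ring

lemma reparam_pos (f g : Bool × Bool → ℝ)
    (hf : ∀ p, 0 < f p) (hg : ∀ p, 0 < g p) (w₁ w₂ : ℝ) (θ : Bool → ℝ) :
    0 < reparamWMBE f g w₁ w₂ θ := by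
  unfold reparamWMBE
  refine Finset.sum_pos (fun y _ => mul_pos ?_ ?_) ⟨false, Finset.mem_univ _⟩
  · exact Real.rpow_pos_of_pos (Finset.sum_pos (fun x _ =>
      Real.rpow_pos_of_pos (mul_pos (Real.exp_pos _) (hf _)) _) ⟨false, Finset.mem_univ _⟩) _
  · exact Real.rpow_pos_of_pos (Finset.sum_pos (fun x _ =>
      Real.rpow_pos_of_pos (mul_pos (Real.exp_pos _) (hg _)) _) ⟨false, Finset.mem_univ _⟩) _

/-- Stationarity of the trivial reparameterization: the directional derivative
of `log F` at `θ = 0` in direction `δ` is `∑ x, δ x * (q_f x - q_g x)`, and for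
symmetric `f, g` the auxiliary marginals are uniform (`= 1/2`), so the
gradient vanishes. -/
theorem reparam_stationarity (f g : Bool × Bool → ℝ)
    (hf : ∀ p, 0 < f p) (hg : ∀ p, 0 < g p)
    (hfsym : ∀ a b, f (!a, !b) = f (a, b))
    (hgsym : ∀ a b, g (!a, !b) = g (a, b))
    (w₁ w₂ : ℝ) (hw₁ : 0 < w₁) (hw₂ : 0 < w₂) (hw : w₁ + w₂ = 1) :
    (∀ δ : Bool → ℝ,
        HasDerivAt
          (fun t : ℝ => Real.log (reparamWMBE f g w₁ w₂ (fun x => t * δ x)))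
          (∑ x : Bool,
            δ x * (auxMarginal f g w₁ w₂ x - auxMarginal g f w₂ w₁ x)) 0) ∧
      (∀ x, auxMarginal f g w₁ w₂ x = 1 / 2) ∧
      (∀ x, auxMarginal g f w₂ w₁ x = 1 / 2) := by
  have hqf : ∀ x, auxMarginal f g w₁ w₂ x = 1 / 2 :=
    aux_half f g hf hg hfsym hgsym w₁ w₂
  have hqg : ∀ x, auxMarginal g f w₂ w₁ x = 1 / 2 :=
    aux_half g f hg hf hgsym hfsym w₂ w₁
  refine ⟨fun δ => ?_, hqf, hqg⟩
  have hS : (∑ x : Bool,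
      δ x * (auxMarginal f g w₁ w₂ x - auxMarginal g f w₂ w₁ x)) = 0 := by
    simp [hqf, hqg]
  rw [hS]
  set H : ℝ → ℝ :=
    fun t : ℝ => Real.log (reparamWMBE f g w₁ w₂ (fun x => t * δ x)) with hH
  have hFd : DifferentiableAt ℝ
      (fun t : ℝ => reparamWMBE f g w₁ w₂ (fun x => t * δ x)) 0 := by
    unfold reparamWMBE
    apply DifferentiableAt.fun_sum
    intro y _
    apply DifferentiableAt.mul
    · apply DifferentiableAt.rpow_const
      · apply DifferentiableAt.fun_sum
        intro x _
        apply DifferentiableAt.rpow_const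
        · exact ((differentiableAt_fun_id.mul_const (δ x)).exp).mul_const _
        · left
          exact (mul_pos (Real.exp_pos _) (hf _)).ne'
      · left
        exact (Finset.sum_pos (fun x _ =>
          Real.rpow_pos_of_pos (mul_pos (Real.exp_pos _) (hf _)) _)
          ⟨false, Finset.mem_univ _⟩).ne'
    · apply DifferentiableAt.rpow_const
      · apply DifferentiableAt.fun_sum
        intro x _
        apply DifferentiableAt.rpow_const
        · exact (((differentiableAt_fun_id.mul_const (δ x)).neg).exp).mul_const _
        · left
          exact (mul_pos (Real.exp_pos _) (hg _)).ne'
      · left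
        exact (Finset.sum_pos (fun x _ =>
          Real.rpow_pos_of_pos (mul_pos (Real.exp_pos _) (hg _)) _)
          ⟨false, Finset.mem_univ _⟩).ne'
  have hHd : DifferentiableAt ℝ H 0 :=
    hFd.log (reparam_pos f g hf hg w₁ w₂ _).ne'
  have heven : ∀ t : ℝ, H (-t) = H t := fun t => by
    simp only [hH]
    rw [F_even f g hf hg hfsym hgsym w₁ w₂ hw₁ hw₂ δ t]
  have hcomp : HasDerivAt H (deriv H 0 * -1) 0 := by
    have h2 : HasDerivAt (H ∘ fun t : ℝ => -t) (deriv H 0 * -1) 0 := by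
      refine HasDerivAt.comp (0:ℝ) ?_ (hasDerivAt_neg (0:ℝ))
      simpa using hHd.hasDerivAt
    have : (H ∘ fun t : ℝ => -t) = H := funext fun t => heven t
    rwa [this] at h2
  have hzero : deriv H 0 = 0 := by
    have := hHd.hasDerivAt.unique hcomp
    linarith
  have h := hHd.hasDerivAt; rw [hzero] at h; exact h
end

section
/- Convexity of the log weighted-sum in reparameterization parameters: for fixed w > 0 and strictly positive f : Fin d × Fin d → ℝ, the map θ ↦ log ∑_y (∑_x (e^{θ(x)} f(x,y))^{1/w})^{w} is a convex function of θ ∈ ℝ^d. -/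
open Finset Real

/-!
A positive function is log-convex when its logarithm is convex. Log-convexity is preserved by
positive powers (the logarithm is scaled) and by finite sums (Hölder's inequality with exponents
`1/a`, `1/b` gives `∑ gᵢ(x)ᵃ gᵢ(y)ᵇ ≤ (∑ gᵢ x)ᵃ (∑ gᵢ y)ᵇ`). Each summand `e^{θ x} f(x,y)` is
log-affine in `θ`, so the inner sum, its power `w`, and the outer sum are all log-convex.
-/

theorem Real.sum_rpow_mul_rpow_le {ι : Type*} (t : Finset ι) {u v : ι → ℝ}
    (hu : ∀ i ∈ t, 0 ≤ u i) (hv : ∀ i ∈ t, 0 ≤ v i)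
    {a b : ℝ} (ha : 0 < a) (hb : 0 < b) (hab : a + b = 1) :
    ∑ i ∈ t, u i ^ a * v i ^ b ≤ (∑ i ∈ t, u i) ^ a * (∑ i ∈ t, v i) ^ b := by
  have inv_rpow : ∀ {c z : ℝ}, 0 < c → 0 ≤ z → (z ^ c) ^ (1 / c) = z := fun hc hz => by
    rw [← rpow_mul hz, mul_one_div_cancel hc.ne', rpow_one]
  have := inner_le_Lp_mul_Lq_of_nonneg t (holderConjugate_one_div ha hb hab)
    (fun i hi => rpow_nonneg (hu i hi) a) (fun i hi => rpow_nonneg (hv i hi) b)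
  rwa [sum_congr rfl fun i hi => inv_rpow ha (hu i hi),
    sum_congr rfl fun i hi => inv_rpow hb (hv i hi), one_div_one_div, one_div_one_div] at this

variable {E ι : Type*} [AddCommGroup E] [Module ℝ E] {s : Set E} {g : E → ℝ}

def LogConvexOn (s : Set E) (g : E → ℝ) : Prop :=
  (∀ x ∈ s, 0 < g x) ∧ ConvexOn ℝ s fun x => log (g x)

theorem ConvexOn.logConvexOn_exp {h : E → ℝ} (hh : ConvexOn ℝ s h) :
    LogConvexOn s fun x => exp (h x) :=
  ⟨fun x _ => exp_pos (h x), by simpa only [log_exp] using hh⟩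

namespace LogConvexOn

theorem mul_const (hg : LogConvexOn s g) {c : ℝ} (hc : 0 < c) :
    LogConvexOn s fun x => g x * c :=
  ⟨fun x hx => mul_pos (hg.1 x hx) hc,
    (hg.2.add_const (log c)).congr fun x hx => (log_mul (hg.1 x hx).ne' hc.ne').symm⟩

theorem rpow (hg : LogConvexOn s g) {p : ℝ} (hp : 0 ≤ p) : LogConvexOn s fun x => g x ^ p :=
  ⟨fun x hx => rpow_pos_of_pos (hg.1 x hx) p,
    (hg.2.smul hp).congr fun x hx => (log_rpow (hg.1 x hx) p).symm⟩

theorem le_rpow_mul_rpow (hg : LogConvexOn s g) {x y : E} (hx : x ∈ s) (hy : y ∈ s)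
    {a b : ℝ} (ha : 0 ≤ a) (hb : 0 ≤ b) (hab : a + b = 1) :
    g (a • x + b • y) ≤ g x ^ a * g y ^ b := by
  have hxy : a • x + b • y ∈ s := hg.2.1 hx hy ha hb hab
  rw [← log_le_log_iff (hg.1 _ hxy) (by have := hg.1 x hx; have := hg.1 y hy; positivity),
    log_mul (rpow_pos_of_pos (hg.1 x hx) a).ne' (rpow_pos_of_pos (hg.1 y hy) b).ne',
    log_rpow (hg.1 x hx), log_rpow (hg.1 y hy)]
  exact hg.2.2 hx hy ha hb hab

theorem of_le_rpow_mul_rpow (hs : Convex ℝ s) (hpos : ∀ x ∈ s, 0 < g x)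
    (hle : ∀ x ∈ s, ∀ y ∈ s, ∀ a b : ℝ, 0 < a → 0 < b → a + b = 1 →
      g (a • x + b • y) ≤ g x ^ a * g y ^ b) :
    LogConvexOn s g := by
  refine ⟨hpos, convexOn_iff_forall_pos.mpr ⟨hs, fun x hx y hy a b ha hb hab => ?_⟩⟩
  rw [smul_eq_mul, smul_eq_mul, ← log_rpow (hpos x hx), ← log_rpow (hpos y hy),
    ← log_mul (rpow_pos_of_pos (hpos x hx) a).ne' (rpow_pos_of_pos (hpos y hy) b).ne']
  exact log_le_log (hpos _ (hs hx hy ha.le hb.le hab)) (hle x hx y hy a b ha hb hab)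

theorem sum {t : Finset ι} (ht : t.Nonempty) {g : ι → E → ℝ}
    (hg : ∀ i ∈ t, LogConvexOn s (g i)) : LogConvexOn s fun x => ∑ i ∈ t, g i x := by
  obtain ⟨i₀, hi₀⟩ := ht
  have hpos : ∀ i ∈ t, ∀ x ∈ s, 0 < g i x := fun i hi => (hg i hi).1
  refine of_le_rpow_mul_rpow (hg i₀ hi₀).2.1
    (fun x hx => sum_pos (fun i hi => hpos i hi x hx) ⟨i₀, hi₀⟩)
    fun x hx y hy a b ha hb hab => ?_
  calc ∑ i ∈ t, g i (a • x + b • y)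
      ≤ ∑ i ∈ t, g i x ^ a * g i y ^ b :=
        sum_le_sum fun i hi => (hg i hi).le_rpow_mul_rpow hx hy ha.le hb.le hab
    _ ≤ (∑ i ∈ t, g i x) ^ a * (∑ i ∈ t, g i y) ^ b :=
        sum_rpow_mul_rpow_le t (fun i hi => (hpos i hi x hx).le) (fun i hi => (hpos i hi y hy).le)
          ha hb hab

end LogConvexOn

/-- Convexity of the log weighted-sum in reparameterization parameters: for
`w > 0` and strictly positive `f`, the map
`θ ↦ log ∑ y (∑ x (e^{θ x} f(x,y))^{1/w})^w` is convex on `ℝ^d`. -/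
theorem log_wsum_convex (d : ℕ) (f : Fin d × Fin d → ℝ)
    (hf : ∀ p, 0 < f p) (w : ℝ) (hw : 0 < w) :
    ConvexOn ℝ Set.univ
      (fun θ : Fin d → ℝ =>
        Real.log (∑ y : Fin d,
          (∑ x : Fin d, (Real.exp (θ x) * f (x, y)) ^ (1 / w)) ^ w)) := by
  rcases isEmpty_or_nonempty (Fin d) with hd | _
  · simpa using convexOn_const (0 : ℝ) convex_univ
  have hterm : ∀ x y, LogConvexOn Set.univ fun θ : Fin d → ℝ => exp (θ x) * f (x, y) :=
    fun x y => (LinearMap.proj x : (Fin d → ℝ) →ₗ[ℝ] ℝ).convexOn convex_univ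
      |>.logConvexOn_exp.mul_const (hf (x, y))
  refine (LogConvexOn.sum univ_nonempty fun y _ => ?_).2
  refine (LogConvexOn.sum univ_nonempty fun x _ => ?_).rpow hw.le
  exact (hterm x y).rpow (one_div_pos.mpr hw).le
end

section
/- MBE is a limiting case of WMBE: for nonnegative f, g : Fin d × Fin d → ℝ, the limit as w → 0⁺ of the WMBE upper bound ∑_y (∑_x f(x,y)^{1/(1−w)})^{1−w} (∑_x g(x,y)^{1/w})^{w} equals the mini-bucket bound ∑_y (∑_x f(x,y)) (max_x g(x,y)). -/
/-!
For each `y`, the two factors of the WMBE bound are `ℓᵖ`-type expressions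
`(∑ x, a x ^ p) ^ p⁻¹` with `p = (1 - w)⁻¹ → 1` and `p = w⁻¹ → ∞`. The first is
continuous in `p` at `p = 1`, where it equals `∑ x, a x`. For nonnegative `a`,
the second is squeezed between `max a` and `n ^ p⁻¹ * max a`, with `n` the number of terms,
so it tends to `max a`.
-/
open Finset Filter Topology

theorem tendsto_sum_rpow_rpow_inv_nhds_one {ι : Type*} (s : Finset ι) (a : ι → ℝ) :
    Tendsto (fun p : ℝ => (∑ i ∈ s, a i ^ p) ^ p⁻¹) (𝓝 1) (𝓝 (∑ i ∈ s, a i)) := by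
  have hsum : Tendsto (fun p : ℝ => ∑ i ∈ s, a i ^ p) (𝓝 1) (𝓝 (∑ i ∈ s, a i ^ (1 : ℝ))) :=
    tendsto_finsetSum _ fun i _ => tendsto_const_nhds.rpow tendsto_id (Or.inr one_pos)
  have hinv : Tendsto (fun p : ℝ => p⁻¹) (𝓝 1) (𝓝 (1 : ℝ)⁻¹) := tendsto_inv₀ one_ne_zero
  simpa using hsum.rpow hinv (by norm_num)

theorem tendsto_sum_rpow_rpow_inv_atTop {ι : Type*} (s : Finset ι) (hs : s.Nonempty)
    (a : ι → ℝ) (ha : ∀ i ∈ s, 0 ≤ a i) :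
    Tendsto (fun p : ℝ => (∑ i ∈ s, a i ^ p) ^ p⁻¹) atTop (𝓝 (s.sup' hs a)) := by
  obtain ⟨i₀, hi₀, hM⟩ := s.exists_mem_eq_sup' hs a
  set M := s.sup' hs a
  have hM₀ : 0 ≤ M := hM ▸ ha i₀ hi₀
  have hcard : (0 : ℝ) < #s := by exact_mod_cast hs.card_pos
  have hupper : Tendsto (fun p : ℝ => (#s : ℝ) ^ p⁻¹ * M) atTop (𝓝 M) := by
    simpa using ((tendsto_const_nhds (x := (#s : ℝ))).rpow tendsto_inv_atTop_zero
      (Or.inl hcard.ne')).mul_const M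
  refine tendsto_of_tendsto_of_tendsto_of_le_of_le' tendsto_const_nhds hupper ?_ ?_
  all_goals filter_upwards [eventually_gt_atTop 0] with p hp
  · calc M = (M ^ p) ^ p⁻¹ := (Real.rpow_rpow_inv hM₀ hp.ne').symm
      _ ≤ (∑ i ∈ s, a i ^ p) ^ p⁻¹ := by
        gcongr
        rw [hM]
        exact single_le_sum (fun i hi => Real.rpow_nonneg (ha i hi) p) hi₀
  · calc (∑ i ∈ s, a i ^ p) ^ p⁻¹ ≤ (#s * M ^ p) ^ p⁻¹ := by
          gcongr
          · exact sum_nonneg fun i hi => Real.rpow_nonneg (ha i hi) p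
          · simpa using sum_le_card_nsmul s (a · ^ p) (M ^ p) fun i hi =>
              Real.rpow_le_rpow (ha i hi) (le_sup' a hi) hp.le
      _ = (#s : ℝ) ^ p⁻¹ * M := by
          rw [Real.mul_rpow hcard.le (Real.rpow_nonneg hM₀ p), Real.rpow_rpow_inv hM₀ hp.ne']

theorem mbe_limit_of_wmbe_general (d : ℕ) [NeZero d] (f g : Fin d × Fin d → ℝ)
    (hg : ∀ p, 0 ≤ g p) :
    Tendsto
      (fun w : ℝ => ∑ y : Fin d,
        (∑ x : Fin d, f (x, y) ^ (1 / (1 - w))) ^ (1 - w) *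
          (∑ x : Fin d, g (x, y) ^ (1 / w)) ^ w)
      (𝓝[>] 0)
      (𝓝 (∑ y : Fin d, (∑ x : Fin d, f (x, y)) *
        Finset.univ.sup' Finset.univ_nonempty (fun x : Fin d => g (x, y)))) := by
  have hp : Tendsto (fun w : ℝ => (1 - w)⁻¹) (𝓝[>] 0) (𝓝 1) := by
    simpa using ((tendsto_const_nhds (x := (1 : ℝ))).sub tendsto_id).inv₀ (by norm_num)
      |>.mono_left (nhdsWithin_le_nhds (a := (0 : ℝ)))
  refine tendsto_finsetSum _ fun y _ => ?_
  have hfactors := ((tendsto_sum_rpow_rpow_inv_nhds_one univ (fun x => f (x, y))).comp hp).mul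
    ((tendsto_sum_rpow_rpow_inv_atTop univ univ_nonempty (fun x => g (x, y))
      fun x _ => hg _).comp tendsto_inv_nhdsGT_zero)
  simpa [Function.comp_def] using hfactors

/-- MBE is a limiting case of WMBE: for nonnegative `f, g`, as `w → 0⁺` the
WMBE bound with weights `(1 - w, w)` tends to the mini-bucket bound
`∑ y (∑ x f(x,y)) (max_x g(x,y))`. -/
theorem mbe_limit_of_wmbe (d : ℕ) [NeZero d] (f g : Fin d × Fin d → ℝ)
    (hf : ∀ p, 0 ≤ f p) (hg : ∀ p, 0 ≤ g p) :
    Tendsto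
      (fun w : ℝ => ∑ y : Fin d,
        (∑ x : Fin d, f (x, y) ^ (1 / (1 - w))) ^ (1 - w) *
          (∑ x : Fin d, g (x, y) ^ (1 / w)) ^ w)
      (𝓝[>] 0)
      (𝓝 (∑ y : Fin d, (∑ x : Fin d, f (x, y)) *
        Finset.univ.sup' Finset.univ_nonempty (fun x : Fin d => g (x, y)))) :=
  mbe_limit_of_wmbe_general d f g hg
end
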